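/- arXiv:1007.2926 — 3 statements merged into one kernel-verified Lean document; each statement's English description precedes it below -/
import Mathlib

section
/- The characteristic polynomial of X ∈ J₃(K) satisfies Φ_X(λ) := det(λE − X) = λ³ − tr(X)λ² + tr(X^{×2})λ − det(X), where X^{×2} = X × X and det(X) = ⅓(X × X | X). -/
open Matrix

/-- `K` is a composition algebra over `F` (with conjugation `star` and norm
`N x = x * star x`): traces and norms are scalars, and the norm is multiplicative. -/
class IsCompAlg (F K : Type*) [Field F] [NonAssocRing K] [Module F K] [StarRing K] : Prop where
  central_trace : ∀ x : K, ∃ c : F, x + star x = c • (1 : K)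
  central_norm : ∀ x : K, ∃ c : F, x * star x = c • (1 : K)
  star_mul_self_comm : ∀ x : K, star x * x = x * star x
  norm_comp : ∀ x y : K, (x * y) * star (x * y) = (x * star x) * (y * star y)

variable (F : Type*) {K : Type*} [Field F] [CharZero F]
  [NonAssocRing K] [Module F K] [SMulCommClass F K K] [IsScalarTower F K K]
  [StarRing K]

/-- The bilinear form `(x|y) = ½ (x ȳ + conj (x ȳ))` on the composition algebra `K`. -/
noncomputable def bK (x y : K) : K := (2:F)⁻¹ • (x * star y + star (x * star y))

/-- The Jordan product `X ∘ Y = ½ (XY + YX)` on 3×3 matrices over `K`. -/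
noncomputable def jord (X Y : Matrix (Fin 3) (Fin 3) K) : Matrix (Fin 3) (Fin 3) K :=
  (2:F)⁻¹ • (X * Y + Y * X)

/-- The trace bilinear form `(X|Y) = tr (X ∘ Y)`. -/
noncomputable def jform (X Y : Matrix (Fin 3) (Fin 3) K) : K := (jord F X Y).trace

/-- The Freudenthal cross product
`X × Y = X∘Y − ½ (tr(X) Y + tr(Y) X − (tr(X)tr(Y) − (X|Y)) E)`. -/
noncomputable def cross (X Y : Matrix (Fin 3) (Fin 3) K) : Matrix (Fin 3) (Fin 3) K :=
  jord F X Y - (2:F)⁻¹ • (X.trace • Y + Y.trace • X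
    - (X.trace * Y.trace - jform F X Y) • (1 : Matrix (Fin 3) (Fin 3) K))

/-- The Freudenthal determinant `det X = ⅓ (X × X | X)`. -/
noncomputable def Det (X : Matrix (Fin 3) (Fin 3) K) : K :=
  (3:F)⁻¹ • jform F (cross F X X) X


set_option linter.unusedSectionVars false

lemma threeK : (3:K) = (3:F) • (1:K) := by
  rw [show (3:F) = ((3:ℕ):F) by norm_num, Nat.cast_smul_eq_nsmul]
  simp

lemma jord_add_left (A B Z : Matrix (Fin 3) (Fin 3) K) :
    jord F (A + B) Z = jord F A Z + jord F B Z := by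
  simp only [jord, Matrix.add_mul, Matrix.mul_add, smul_add]
  module

lemma jord_smul_left (a : F) (A Z : Matrix (Fin 3) (Fin 3) K) :
    jord F (a • A) Z = a • jord F A Z := by
  simp only [jord, Matrix.smul_mul, Matrix.mul_smul, smul_add, smul_comm a]

lemma jord_sub_right (A B Z : Matrix (Fin 3) (Fin 3) K) :
    jord F Z (A - B) = jord F Z A - jord F Z B := by
  simp only [jord, Matrix.sub_mul, Matrix.mul_sub, smul_sub]
  module

lemma jord_smul_right (a : F) (A Z : Matrix (Fin 3) (Fin 3) K) :
    jord F Z (a • A) = a • jord F Z A := by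
  simp only [jord, Matrix.smul_mul, Matrix.mul_smul, smul_add, smul_comm a]

lemma jord_one_left (A : Matrix (Fin 3) (Fin 3) K) : jord F 1 A = A := by
  rw [jord, Matrix.one_mul, Matrix.mul_one, ← two_smul F A, smul_smul,
    inv_mul_cancel₀ (two_ne_zero), one_smul]

lemma jord_one_right (A : Matrix (Fin 3) (Fin 3) K) : jord F A 1 = A := by
  rw [jord, Matrix.one_mul, Matrix.mul_one, ← two_smul F A, smul_smul,
    inv_mul_cancel₀ (two_ne_zero), one_smul]

set_option maxHeartbeats 1000000 in
lemma trace_jord_aux (X : Matrix (Fin 3) (Fin 3) K) :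
    (jord F (X - X.trace • (1 : Matrix (Fin 3) (Fin 3) K)) X).trace
      = (-2:F) • (cross F X X).trace := by
  simp [cross, jform, jord, Matrix.trace, Matrix.diag, Matrix.mul_apply,
    Fin.sum_univ_three, Matrix.one_apply, smul_eq_mul, mul_add, add_mul, mul_sub, sub_mul,
    smul_sub, smul_add, smul_smul, mul_smul_comm, smul_mul_assoc]
  simp only [threeK F, smul_mul_assoc, mul_smul_comm, one_mul, mul_one, smul_smul]
  module

lemma traceKone (t : K) :
    ((t • (1 : Matrix (Fin 3) (Fin 3) K)) : Matrix (Fin 3) (Fin 3) K).trace = (3:F) • t := by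
  simp [Matrix.trace, Matrix.diag, Matrix.smul_apply, Matrix.one_apply, Fin.sum_univ_three,
    smul_eq_mul, mul_one]
  rw [threeK F, smul_mul_assoc, one_mul]

set_option maxHeartbeats 1000000 in
lemma crossYY (X : Matrix (Fin 3) (Fin 3) K) (l : F) :
    cross F (l • (1 : Matrix (Fin 3) (Fin 3) K) - X) (l • 1 - X)
      = (l^2) • (1 : Matrix (Fin 3) (Fin 3) K) + l • (X - X.trace • 1) + cross F X X := by
  ext i j
  fin_cases i <;> fin_cases j <;>
    (simp [cross, jform, jord, Matrix.trace, Matrix.diag, Matrix.mul_apply,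
      Fin.sum_univ_three, Matrix.one_apply, smul_eq_mul, mul_add, add_mul, mul_sub, sub_mul,
      smul_sub, smul_add, smul_smul, mul_smul_comm, smul_mul_assoc];
     simp only [threeK F, smul_mul_assoc, mul_smul_comm, one_mul, mul_one, smul_smul];
     module)

/-- The characteristic polynomial:
`Φ_X(λ) = det(λE − X) = λ³ − tr(X) λ² + tr(X^{×2}) λ − det(X)`. -/
theorem charPoly_expand [IsCompAlg F K] (X : Matrix (Fin 3) (Fin 3) K) (hX : Xᴴ = X) :
    ∀ l : F, Det F (l • (1 : Matrix (Fin 3) (Fin 3) K) - X)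
      = l ^ 3 • (1 : K) - l ^ 2 • X.trace + l • (cross F X X).trace - Det F X := by
  intro l
  rw [Det, Det, jform, jform, crossYY]
  simp only [jord_add_left, jord_smul_left, jord_sub_right, jord_smul_right,
    jord_one_left, jord_one_right]
  simp only [Matrix.trace_add, Matrix.trace_sub, Matrix.trace_smul, Matrix.trace_one,
    trace_jord_aux, traceKone F, Fintype.card_fin, Nat.cast_ofNat, threeK F]
  module
end

section
/- For X ∈ J₃(K), the trace of the left Jordan multiplication operator L_X^∘ on J₃(K) equals (d_K + 1)·tr(X), and the trace of the left cross-multiplication operator L_X^× equals −(d_K/2)·tr(X), where d_K = dim_ℝ K. -/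
open Matrix

variable (F : Type*) {K : Type*} [Field F] [CharZero F]
  [NonAssocRing K] [Module F K] [SMulCommClass F K K] [IsScalarTower F K K]
  [StarRing K]

/-! The trace of an endomorphism of `J₃(K)` can be computed block by block: `J₃(K)` is the sum
of three diagonal blocks `ℝ·E_jj ≅ {s ∈ K | s̄ = s}` (one-dimensional for a composition algebra)
and three off-diagonal blocks `{z E_ab + z̄ E_ba} ≅ K`, `(a, b) = (p + 1, p + 2)` mod 3, and by
cyclicity of the trace only the compressions of the operator to these blocks matter. Since the
diagonal of a hermitian `X` is real, `x_j := X_jj`, each compression of `L_X^∘` and `L_X^×` is a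
scalar: `x_j` and `0` on the diagonal blocks, `(x_a + x_b)/2` and `(x_a + x_b)/2 - tr(X)/2` on
the off-diagonal ones. Summing with the block dimensions `1` and `d_K` gives the two formulas. -/

theorem LinearMap.trace_sum_comp_comp {R M N ι : Type*} [CommRing R] [AddCommGroup M]
    [Module R M] [Module.Free R M] [Module.Finite R M] [AddCommGroup N] [Module R N]
    [Module.Free R N] [Module.Finite R N] [Fintype ι]
    (i : ι → N →ₗ[R] M) (p : ι → M →ₗ[R] N) (f : M →ₗ[R] M) :
    trace R M ((∑ k, i k ∘ₗ p k) ∘ₗ f) = ∑ k, trace R N (p k ∘ₗ f ∘ₗ i k) := by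
  rw [← Module.End.mul_eq_comp, Finset.sum_mul, map_sum]
  exact Finset.sum_congr rfl fun k _ => by
    rw [Module.End.mul_eq_comp, comp_assoc, trace_comp_comm', comp_assoc]

theorem IsCompAlg.selfAdjoint_submodule_eq_span_one {F K : Type*} [Field F] [CharZero F]
    [StarRing F] [TrivialStar F] [NonAssocRing K] [Module F K] [StarRing K] [StarModule F K]
    [IsCompAlg F K] : selfAdjoint.submodule F K = F ∙ (1 : K) := by
  refine le_antisymm (fun y hy => ?_) ((Submodule.span_singleton_le_iff_mem _ _).2 ?_)
  · obtain ⟨c, hc⟩ := IsCompAlg.central_trace (F := F) y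
    rw [(hy : IsSelfAdjoint y).star_eq, ← two_smul F] at hc
    refine Submodule.mem_span_singleton.2 ⟨(2 : F)⁻¹ * c, ?_⟩
    rw [mul_smul, ← hc, smul_smul, inv_mul_cancel₀ two_ne_zero, one_smul]
  · exact IsSelfAdjoint.one K

theorem IsCompAlg.finrank_selfAdjoint {F K : Type*} [Field F] [CharZero F] [StarRing F]
    [TrivialStar F] [NonAssocRing K] [Nontrivial K] [Module F K] [StarRing K] [StarModule F K]
    [IsCompAlg F K] : Module.finrank F (selfAdjoint.submodule F K) = 1 := by
  rw [IsCompAlg.selfAdjoint_submodule_eq_span_one, finrank_span_singleton one_ne_zero]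

theorem Fin.add_one_ne_add_two (p : Fin 3) : p + 1 ≠ p + 2 := by
  fin_cases p <;> decide

namespace Matrix

section HermSingle

variable {K : Type*} [AddCommMonoid K] [StarAddMonoid K] {a b : Fin 3}

def hermSingle (a b : Fin 3) (z : K) : Matrix (Fin 3) (Fin 3) K :=
  single a b z + single b a (star z)

theorem isSelfAdjoint_hermSingle (a b : Fin 3) (z : K) : IsSelfAdjoint (hermSingle a b z) := by
  simp only [IsSelfAdjoint, hermSingle, star_add, star_eq_conjTranspose, conjTranspose_single,
    star_star]
  exact add_comm _ _

theorem hermSingle_apply_self (hab : a ≠ b) (z : K) : hermSingle a b z a b = z := by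
  rw [hermSingle, add_apply, single_apply_same, single_apply_of_row_ne hab.symm, add_zero]

theorem trace_hermSingle (hab : a ≠ b) (z : K) : (hermSingle a b z).trace = 0 := by
  rw [hermSingle, trace_add, trace_single_eq_of_ne _ _ _ hab,
    trace_single_eq_of_ne _ _ _ hab.symm, add_zero]

end HermSingle

theorem trace_eq_sum_smul_one {K : Type*} [NonAssocRing K] [Module ℝ K]
    {X : Matrix (Fin 3) (Fin 3) K} {x : Fin 3 → ℝ} (hx : ∀ i, X i i = x i • 1) :
    X.trace = (∑ i, x i) • 1 := by
  simp only [trace, diag, hx, Finset.sum_smul]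

section RealDiagonal

variable {K : Type*} [NonAssocRing K] [Module ℝ K] [SMulCommClass ℝ K K] [IsScalarTower ℝ K K]
  {X : Matrix (Fin 3) (Fin 3) K} {x : Fin 3 → ℝ}

theorem jord_single_self_apply (hx : ∀ i, X i i = x i • 1) (j : Fin 3) (s : K) :
    jord ℝ X (single j j s) j j = x j • s := by
  simp only [jord, smul_apply, add_apply, mul_single_apply_same, single_mul_apply_same, hx,
    smul_mul_assoc, mul_smul_comm, one_mul, mul_one]
  module

theorem jform_single_self (hx : ∀ i, X i i = x i • 1) (j : Fin 3) (s : K) :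
    jform ℝ X (single j j s) = x j • s := by
  simp only [jform, jord, trace_smul, trace_add, trace_mul_single, trace_single_mul, hx,
    MulOpposite.smul_eq_mul_unop, MulOpposite.unop_op, smul_eq_mul,
    smul_mul_assoc, mul_smul_comm, one_mul, mul_one]
  module

theorem cross_single_self_apply (hx : ∀ i, X i i = x i • 1) (j : Fin 3) (s : K) :
    cross ℝ X (single j j s) j j = 0 := by
  simp only [cross, sub_apply, smul_apply, add_apply, jord_single_self_apply hx,
    jform_single_self hx, trace_eq_sum_smul_one hx, trace_single_eq_same, single_apply_same,
    one_apply_eq, hx, smul_eq_mul, smul_mul_assoc, mul_smul_comm, one_mul, mul_one]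
  module

variable [StarRing K]

theorem jord_hermSingle_apply {a b : Fin 3} (hx : ∀ i, X i i = x i • 1)
    (hab : a ≠ b) (z : K) :
    jord ℝ X (hermSingle a b z) a b = (2⁻¹ * (x a + x b)) • z := by
  simp only [jord, hermSingle, smul_apply, add_apply, mul_add, add_mul,
    mul_single_apply_same, single_mul_apply_same, mul_single_apply_of_ne _ _ _ _ _ hab.symm,
    single_mul_apply_of_ne _ _ _ _ _ hab, hx, smul_mul_assoc, mul_smul_comm, one_mul, mul_one]
  module

theorem cross_hermSingle_apply {a b : Fin 3} (hx : ∀ i, X i i = x i • 1) (hab : a ≠ b) (z : K) :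
    cross ℝ X (hermSingle a b z) a b = (2⁻¹ * (x a + x b) - 2⁻¹ * ∑ i, x i) • z := by
  simp only [cross, sub_apply, smul_apply, add_apply, jord_hermSingle_apply hx hab,
    trace_hermSingle hab, trace_eq_sum_smul_one hx, one_apply_ne hab, smul_eq_mul, mul_zero,
    hermSingle_apply_self hab, zero_mul, add_zero, sub_zero, smul_mul_assoc, one_mul]
  module

end RealDiagonal

section Blocks

variable {K : Type*} [NonAssocRing K] [Module ℝ K] [StarRing K] [StarModule ℝ K]

local notation "𝒥" => selfAdjoint.submodule ℝ (Matrix (Fin 3) (Fin 3) K)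

@[simps]
def diagEntry (j : Fin 3) : 𝒥 →ₗ[ℝ] selfAdjoint.submodule ℝ K where
  toFun Y := ⟨(Y : Matrix (Fin 3) (Fin 3) K) j j, (isHermitian_iff_isSelfAdjoint.2 Y.2).apply j j⟩
  map_add' _ _ := rfl
  map_smul' _ _ := rfl

@[simps]
def diagSingle (j : Fin 3) : selfAdjoint.submodule ℝ K →ₗ[ℝ] 𝒥 where
  toFun s := ⟨single j j (s : K), by
    change star _ = _
    rw [star_eq_conjTranspose, conjTranspose_single, (s.2 : IsSelfAdjoint (s : K)).star_eq]⟩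
  map_add' _ _ := Subtype.ext (single_add _ _ _ _)
  map_smul' _ _ := Subtype.ext (smul_single _ _ _ _).symm

@[simps]
def offDiagEntry (a b : Fin 3) : 𝒥 →ₗ[ℝ] K where
  toFun Y := (Y : Matrix (Fin 3) (Fin 3) K) a b
  map_add' _ _ := rfl
  map_smul' _ _ := rfl

@[simps]
def offDiagSingle (a b : Fin 3) : K →ₗ[ℝ] 𝒥 where
  toFun z := ⟨hermSingle a b z, isSelfAdjoint_hermSingle a b z⟩
  map_add' _ _ := Subtype.ext <| by
    simp only [hermSingle, star_add, single_add, Submodule.coe_add]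
    abel
  map_smul' _ _ := Subtype.ext <| by
    simp only [hermSingle, star_smul, smul_add, smul_single, star_trivial, RingHom.id_apply,
      Submodule.coe_smul]

theorem sum_diagSingle_comp_add_sum_offDiagSingle_comp :
    ∑ j, diagSingle j ∘ₗ diagEntry j +
      ∑ p : Fin 3, offDiagSingle (p + 1) (p + 2) ∘ₗ offDiagEntry (p + 1) (p + 2) =
      (LinearMap.id : 𝒥 →ₗ[ℝ] 𝒥) := by
  ext Y i j
  have hY := isHermitian_iff_isSelfAdjoint.2 Y.2
  fin_cases i <;> fin_cases j <;> simp [Fin.sum_univ_three, hermSingle, hY.apply]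

variable [FiniteDimensional ℝ K]

theorem trace_eq_sum_diag_add_sum_offDiag (f : 𝒥 →ₗ[ℝ] 𝒥) :
    LinearMap.trace ℝ 𝒥 f = ∑ j, LinearMap.trace ℝ _ (diagEntry j ∘ₗ f ∘ₗ diagSingle j) +
      ∑ p : Fin 3, LinearMap.trace ℝ K
        (offDiagEntry (p + 1) (p + 2) ∘ₗ f ∘ₗ offDiagSingle (p + 1) (p + 2)) := by
  conv_lhs => rw [← LinearMap.id_comp f, ← sum_diagSingle_comp_add_sum_offDiagSingle_comp,
    LinearMap.add_comp, map_add, LinearMap.trace_sum_comp_comp, LinearMap.trace_sum_comp_comp]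

theorem trace_eq_of_apply_single_eq_smul (f : 𝒥 →ₗ[ℝ] 𝒥)
    (g : Matrix (Fin 3) (Fin 3) K → Matrix (Fin 3) (Fin 3) K)
    (hf : ∀ Y : 𝒥, (f Y : Matrix (Fin 3) (Fin 3) K) = g Y) (d o : Fin 3 → ℝ)
    (hd : ∀ j s, g (single j j s) j j = d j • s)
    (ho : ∀ p z, g (hermSingle (p + 1) (p + 2) z) (p + 1) (p + 2) = o p • z) :
    LinearMap.trace ℝ 𝒥 f = (∑ j, d j) * Module.finrank ℝ (selfAdjoint.submodule ℝ K) +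
      (∑ p, o p) * Module.finrank ℝ K := by
  have hdiag : ∀ j, diagEntry j ∘ₗ f ∘ₗ diagSingle j = d j • LinearMap.id := fun j =>
    LinearMap.ext fun s => Subtype.ext <| by simp [hf, hd]
  have hoff : ∀ p, offDiagEntry (p + 1) (p + 2) ∘ₗ f ∘ₗ offDiagSingle (p + 1) (p + 2) =
      o p • LinearMap.id := fun p => LinearMap.ext fun z => by simp [hf, ho]
  simp only [trace_eq_sum_diag_add_sum_offDiag, hdiag, hoff, map_smul, LinearMap.trace_id,
    smul_eq_mul, Finset.sum_mul]

end Blocks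

end Matrix

theorem trace_mulLeft_jord_general {K : Type*} [NonAssocRing K] [Module ℝ K]
    [SMulCommClass ℝ K K] [IsScalarTower ℝ K K] [StarRing K] [StarModule ℝ K]
    [FiniteDimensional ℝ K] [IsCompAlg ℝ K]
    (X : Matrix (Fin 3) (Fin 3) K) (hX : Xᴴ = X)
    (T T' : ↥(selfAdjoint.submodule ℝ (Matrix (Fin 3) (Fin 3) K)) →ₗ[ℝ]
      ↥(selfAdjoint.submodule ℝ (Matrix (Fin 3) (Fin 3) K)))
    (hT : ∀ Y : ↥(selfAdjoint.submodule ℝ (Matrix (Fin 3) (Fin 3) K)),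
      (T Y : Matrix (Fin 3) (Fin 3) K) = jord ℝ X (Y : Matrix (Fin 3) (Fin 3) K))
    (hT' : ∀ Y : ↥(selfAdjoint.submodule ℝ (Matrix (Fin 3) (Fin 3) K)),
      (T' Y : Matrix (Fin 3) (Fin 3) K) = cross ℝ X (Y : Matrix (Fin 3) (Fin 3) K)) :
    (LinearMap.trace ℝ _ T) • (1 : K) = ((Module.finrank ℝ K : ℝ) + 1) • X.trace ∧
    (LinearMap.trace ℝ _ T') • (1 : K) = (-(Module.finrank ℝ K : ℝ) / 2) • X.trace := by
  cases subsingleton_or_nontrivial K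
  · exact ⟨Subsingleton.elim _ _, Subsingleton.elim _ _⟩
  have hdiag : ∀ i, X i i ∈ ℝ ∙ (1 : K) := fun i => by
    rw [← IsCompAlg.selfAdjoint_submodule_eq_span_one]
    exact IsHermitian.apply hX i i
  choose x hx using fun i => Submodule.mem_span_singleton.1 (hdiag i)
  replace hx : ∀ i, X i i = x i • 1 := fun i => (hx i).symm
  have hcyc : ∑ p : Fin 3, (x (p + 1) + x (p + 2)) = 2 * ∑ i, x i := by
    rw [Finset.sum_add_distrib, Fintype.sum_equiv (Equiv.addRight 1) (fun p => x (p + 1)) x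
      fun _ => rfl, Fintype.sum_equiv (Equiv.addRight 2) (fun p => x (p + 2)) x fun _ => rfl,
      two_mul]
  have hJ := trace_eq_of_apply_single_eq_smul T _ hT x (fun p => 2⁻¹ * (x (p + 1) + x (p + 2)))
    (jord_single_self_apply hx) (fun p => jord_hermSingle_apply hx p.add_one_ne_add_two)
  have hC := trace_eq_of_apply_single_eq_smul T' _ hT' 0
    (fun p => 2⁻¹ * (x (p + 1) + x (p + 2)) - 2⁻¹ * ∑ i, x i)
    (by simpa using cross_single_self_apply hx)
    (fun p => cross_hermSingle_apply hx p.add_one_ne_add_two)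
  rw [IsCompAlg.finrank_selfAdjoint] at hJ hC
  rw [hJ, hC, trace_eq_sum_smul_one hx, smul_smul, smul_smul, ← Finset.mul_sum,
    Finset.sum_sub_distrib, ← Finset.mul_sum, hcyc]
  constructor <;> congr 1 <;> simp <;> ring

/-- The traces of the left Jordan and cross multiplication operators `L_X^∘` and
`L_X^×` on `J₃(K)` are `(d_K + 1)·tr(X)` and `−(d_K/2)·tr(X)` respectively. -/
theorem trace_mulLeft_jord {K : Type*} [NonAssocRing K] [Module ℝ K]
    [SMulCommClass ℝ K K] [IsScalarTower ℝ K K] [StarRing K] [StarModule ℝ K]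
    [FiniteDimensional ℝ K] [IsCompAlg ℝ K]
    (hd : Module.finrank ℝ K = 1 ∨ Module.finrank ℝ K = 2 ∨
      Module.finrank ℝ K = 4 ∨ Module.finrank ℝ K = 8)
    (X : Matrix (Fin 3) (Fin 3) K) (hX : Xᴴ = X)
    (T T' : ↥(selfAdjoint.submodule ℝ (Matrix (Fin 3) (Fin 3) K)) →ₗ[ℝ]
      ↥(selfAdjoint.submodule ℝ (Matrix (Fin 3) (Fin 3) K)))
    (hT : ∀ Y : ↥(selfAdjoint.submodule ℝ (Matrix (Fin 3) (Fin 3) K)),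
      (T Y : Matrix (Fin 3) (Fin 3) K) = jord ℝ X (Y : Matrix (Fin 3) (Fin 3) K))
    (hT' : ∀ Y : ↥(selfAdjoint.submodule ℝ (Matrix (Fin 3) (Fin 3) K)),
      (T' Y : Matrix (Fin 3) (Fin 3) K) = cross ℝ X (Y : Matrix (Fin 3) (Fin 3) K)) :
    (LinearMap.trace ℝ _ T) • (1 : K) = ((Module.finrank ℝ K : ℝ) + 1) • X.trace ∧
    (LinearMap.trace ℝ _ T') • (1 : K) = (-(Module.finrank ℝ K : ℝ) / 2) • X.trace :=
  trace_mulLeft_jord_general X hX T T' hT hT'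
end

section
/- If Y = r₂E₂ + r₃E₃ + F₁(x₁) lies in the Peirce subspace J₂(K) ⊂ J₃(K) (no E₁, F₂, F₃ components), then Y^{×2} = (r₂r₃ − N(x₁))·E₁, and the characteristic polynomial factors as Φ_{r₁E₁+Y}(λ) = (λ − r₁)(λ² − (r₂+r₃)λ + r₂r₃ − N(x₁)). -/
open Matrix

variable (F : Type*) {K : Type*} [Field F] [CharZero F]
  [NonAssocRing K] [Module F K] [SMulCommClass F K K] [IsScalarTower F K K]
  [StarRing K]

/-- The diagonal basis element `E_i`. -/
def Ei (K : Type*) [NonAssocRing K] (i : Fin 3) : Matrix (Fin 3) (Fin 3) K :=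
  Matrix.single i i 1

/-- The off-diagonal hermitian basis element `F_i(x)`, with `x` in position
`(i+1, i+2)` and `star x` in position `(i+2, i+1)` (indices mod 3). -/
def Fi (i : Fin 3) (x : K) : Matrix (Fin 3) (Fin 3) K :=
  Matrix.single (i+1) (i+2) x + Matrix.single (i+2) (i+1) (star x)

section PeirceBlock

variable (𝕜 : Type*) {A : Type*} [Field 𝕜] [NonAssocRing A] [Module 𝕜 A]

/-- The block-diagonal matrix `diag(a, [[b, u], [v, c]])`. Both `Y` and `λE − (r₁E₁ + Y)` have
this shape, and once `uv = vu` is a scalar, `X^{×2}` and `det X` reduce to `2×2` computations. -/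
def peirceMat (a b c : 𝕜) (u v : A) : Matrix (Fin 3) (Fin 3) A :=
  !![a • 1, 0, 0; 0, b • 1, u; 0, v, c • 1]

lemma peirce_eq_peirceMat [StarRing A] (r2 r3 : 𝕜) (x : A) :
    r2 • Ei A 1 + r3 • Ei A 2 + Fi 0 x = peirceMat 𝕜 0 r2 r3 x (star x) := by
  ext i j
  fin_cases i <;> fin_cases j <;> simp [Ei, Fi, peirceMat, Matrix.single]

lemma smul_one_sub_peirce_eq_peirceMat [StarRing A] (l r1 r2 r3 : 𝕜) (x : A) :
    l • (1 : Matrix (Fin 3) (Fin 3) A) - (r1 • Ei A 0 + r2 • Ei A 1 + r3 • Ei A 2 + Fi 0 x)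
      = peirceMat 𝕜 (l - r1) (l - r2) (l - r3) (-x) (-star x) := by
  ext i j
  fin_cases i <;> fin_cases j <;> simp [Ei, Fi, peirceMat, Matrix.single, sub_smul]

lemma peirceMat_eq_smul_Ei_zero (a : 𝕜) :
    peirceMat 𝕜 a 0 0 (0 : A) 0 = (a • (1 : A)) • Ei A 0 := by
  ext i j
  fin_cases i <;> fin_cases j <;> simp [Ei, peirceMat, Matrix.single]

variable [CharZero 𝕜]

lemma bK_self [StarRing A] (x : A) : bK 𝕜 x x = x * star x := by
  rw [bK, star_mul, star_star, ← two_smul 𝕜, smul_smul, inv_mul_cancel₀ two_ne_zero, one_smul]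

variable [SMulCommClass 𝕜 A A] [IsScalarTower 𝕜 A A]

lemma cross_self_peirceMat (a b c n : 𝕜) (u v : A) (huv : u * v = n • (1 : A))
    (hvu : v * u = n • (1 : A)) :
    cross 𝕜 (peirceMat 𝕜 a b c u v) (peirceMat 𝕜 a b c u v)
      = peirceMat 𝕜 (b * c - n) (a * c) (a * b) (-(a • u)) (-(a • v)) := by
  unfold cross jform jord peirceMat
  ext i j
  fin_cases i <;> fin_cases j <;>
    simp [Matrix.trace_fin_three, smul_mul_assoc, mul_smul_comm, mul_add, add_mul, huv, hvu] <;>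
    match_scalars <;> field_simp <;> ring

lemma Det_peirceMat (a b c n : 𝕜) (u v : A) (huv : u * v = n • (1 : A))
    (hvu : v * u = n • (1 : A)) :
    Det 𝕜 (peirceMat 𝕜 a b c u v) = (a * (b * c - n)) • (1 : A) := by
  rw [Det, cross_self_peirceMat 𝕜 a b c n u v huv hvu]
  unfold jform jord peirceMat
  simp [Matrix.trace_fin_three, smul_mul_assoc, mul_smul_comm, huv, hvu]
  match_scalars
  field_simp
  ring

end PeirceBlock

/-- For `Y = r₂E₂ + r₃E₃ + F₁(x₁)` in the Peirce subspace `J₂(K)`: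
`Y^{×2} = (r₂r₃ − N(x₁)) E₁` and
`Φ_{r₁E₁+Y}(λ) = (λ−r₁)(λ² − (r₂+r₃)λ + r₂r₃ − N(x₁))`. -/
theorem peirce_crossSq [IsCompAlg F K] (r1 r2 r3 : F) (x1 : K) :
    cross F (r2 • Ei K 1 + r3 • Ei K 2 + Fi 0 x1) (r2 • Ei K 1 + r3 • Ei K 2 + Fi 0 x1)
      = ((r2 * r3) • (1 : K) - bK F x1 x1) • Ei K 0 ∧
    ∀ l : F, Det F (l • (1 : Matrix (Fin 3) (Fin 3) K)
          - (r1 • Ei K 0 + r2 • Ei K 1 + r3 • Ei K 2 + Fi 0 x1))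
      = ((l - r1) * (l ^ 2 - (r2 + r3) * l + r2 * r3)) • (1 : K)
        - (l - r1) • bK F x1 x1 := by
  obtain ⟨n, hxx⟩ := IsCompAlg.central_norm (F := F) x1
  have hxx' : star x1 * x1 = n • (1 : K) := by
    rw [IsCompAlg.star_mul_self_comm (F := F), hxx]
  have hN : bK F x1 x1 = n • (1 : K) := by rw [bK_self, hxx]
  refine ⟨?_, fun l => ?_⟩
  · rw [peirce_eq_peirceMat F, cross_self_peirceMat F 0 r2 r3 n x1 (star x1) hxx hxx', hN,
      ← sub_smul]
    simpa using peirceMat_eq_smul_Ei_zero F (A := K) (r2 * r3 - n)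
  · rw [smul_one_sub_peirce_eq_peirceMat F, Det_peirceMat F _ _ _ n _ _
      (by rw [neg_mul_neg, hxx]) (by rw [neg_mul_neg, hxx']), hN, smul_smul, ← sub_smul]
    congr 1
    ring
end
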